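/- Let c ∈ ℝ, ρ(r) = -1/(r - i c), ρ̄ = conj(ρ). Define the second-order operator (L y)(r) = d²y/dr² - 2 ρ̄ dy/dr - 2 ρ̄² y + 2 ρ (ρ̄ - ρ) y, i.e. L y = d/dr[ (d/dr - 2ρ̄) y ] + 2ρ(ρ̄ - ρ) y. Then the functions y₁(r) = ρ̄ (ρ + ρ̄) and y₂(r) = ρ̄ (ρ̄ - 2ρ)/ρ³ both satisfy L y = 0 on (0,∞). -/

import Mathlib

/-!
The coefficients of `L` are built from `ρ` and `ρ̄`, which satisfy the Riccati equations
`ρ' = ρ²` and `ρ̄' = ρ̄²`. Hence `∂ (ρ^a ρ̄^b) = (a ρ + b ρ̄) ρ^a ρ̄^b` for all integers `a, b`,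
and `L (ρ^a ρ̄^b) = σ_{a,b}(ρ, ρ̄) ρ^a ρ̄^b` for an explicit quadratic form `σ_{a,b}`
(`kerrIndicial`). Both solutions are two-term combinations of such monomials,
`y₁ = ρ ρ̄ + ρ̄²` and `y₂ = ρ^{-3} ρ̄² - 2 ρ^{-2} ρ̄`, whose `σ`-weighted terms cancel.
-/

open Complex Filter Topology

noncomputable def rhoK (c : ℝ) (r : ℝ) : ℂ := -1 / ((r : ℂ) - c * Complex.I)

noncomputable def rhoKbar (c : ℝ) (r : ℝ) : ℂ := (starRingEnd ℂ) (rhoK c r)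

noncomputable def Lop (c : ℝ) (y : ℝ → ℂ) (r : ℝ) : ℂ :=
  deriv (deriv y) r - 2 * rhoKbar c r * deriv y r - 2 * (rhoKbar c r) ^ 2 * y r
    + 2 * rhoK c r * (rhoKbar c r - rhoK c r) * y r

theorem hasDerivAt_zpow_mul_zpow_of_riccati {p q : ℝ → ℂ} {r : ℝ}
    (hp : HasDerivAt p (p r ^ 2) r) (hq : HasDerivAt q (q r ^ 2) r)
    (hp0 : p r ≠ 0) (hq0 : q r ≠ 0) (a b : ℤ) :
    HasDerivAt (fun s => p s ^ a * q s ^ b) ((a * p r + b * q r) * (p r ^ a * q r ^ b)) r := by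
  have hpa := (hasDerivAt_zpow a (p r) (Or.inl hp0)).comp r hp
  have hqb := (hasDerivAt_zpow b (q r) (Or.inl hq0)).comp r hq
  refine (hpa.fun_mul hqb).congr_deriv ?_
  simp only [Function.comp_apply, zpow_sub_one₀ hp0, zpow_sub_one₀ hq0]
  field_simp

section Kerr

variable {c r : ℝ}

theorem eventually_ofReal_sub_mul_I_ne_zero (hz : (r : ℂ) - c * I ≠ 0) :
    ∀ᶠ s : ℝ in 𝓝 r, (s : ℂ) - c * I ≠ 0 :=
  (show Continuous fun s : ℝ => (s : ℂ) - c * I by fun_prop).continuousAt.eventually_ne hz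

theorem rhoK_ne_zero (hz : (r : ℂ) - c * I ≠ 0) : rhoK c r ≠ 0 := by
  simp [rhoK, hz]

theorem rhoKbar_ne_zero (hz : (r : ℂ) - c * I ≠ 0) : rhoKbar c r ≠ 0 :=
  (map_ne_zero _).mpr (rhoK_ne_zero hz)

theorem hasDerivAt_rhoK (hz : (r : ℂ) - c * I ≠ 0) : HasDerivAt (rhoK c) (rhoK c r ^ 2) r := by
  refine ((hasDerivAt_const r (-1 : ℂ)).fun_div
    ((hasDerivAt_id r).ofReal_comp.sub_const (c * I)) hz).congr_deriv ?_
  simp only [rhoK, id, ofReal_one]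
  field_simp
  ring

theorem hasDerivAt_rhoKbar (hz : (r : ℂ) - c * I ≠ 0) :
    HasDerivAt (rhoKbar c) (rhoKbar c r ^ 2) r := by
  refine (hasDerivAt_rhoK hz).star.congr_deriv ?_
  simp only [rhoKbar, star_pow, Complex.star_def]

noncomputable def kerrMonomial (c : ℝ) (a b : ℤ) (s : ℝ) : ℂ := rhoK c s ^ a * rhoKbar c s ^ b

theorem hasDerivAt_kerrMonomial (hz : (r : ℂ) - c * I ≠ 0) (a b : ℤ) :
    HasDerivAt (kerrMonomial c a b)
      ((a * rhoK c r + b * rhoKbar c r) * kerrMonomial c a b r) r :=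
  hasDerivAt_zpow_mul_zpow_of_riccati (hasDerivAt_rhoK hz) (hasDerivAt_rhoKbar hz)
    (rhoK_ne_zero hz) (rhoKbar_ne_zero hz) a b

theorem eventually_hasDerivAt_kerrMonomial (hz : (r : ℂ) - c * I ≠ 0) (a b : ℤ) :
    ∀ᶠ s in 𝓝 r, HasDerivAt (kerrMonomial c a b)
      ((a * rhoK c s + b * rhoKbar c s) * kerrMonomial c a b s) s := by
  filter_upwards [eventually_ofReal_sub_mul_I_ne_zero hz] with s hs
  exact hasDerivAt_kerrMonomial hs a b

theorem hasDerivAt_deriv_kerrMonomial (hz : (r : ℂ) - c * I ≠ 0) (a b : ℤ) :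
    HasDerivAt (fun s => (a * rhoK c s + b * rhoKbar c s) * kerrMonomial c a b s)
      (((a * rhoK c r + b * rhoKbar c r) ^ 2 + a * rhoK c r ^ 2 + b * rhoKbar c r ^ 2)
        * kerrMonomial c a b r) r := by
  refine ((((hasDerivAt_rhoK hz).const_mul (a : ℂ)).fun_add
    ((hasDerivAt_rhoKbar hz).const_mul (b : ℂ))).fun_mul
      (hasDerivAt_kerrMonomial hz a b)).congr_deriv ?_
  ring

theorem Lop_eq_of_hasDerivAt {y y' : ℝ → ℂ} {y'' : ℂ}
    (hy : ∀ᶠ s in 𝓝 r, HasDerivAt y (y' s) s) (hy' : HasDerivAt y' y'' r) :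
    Lop c y r = y'' - 2 * rhoKbar c r * y' r - 2 * rhoKbar c r ^ 2 * y r
      + 2 * rhoK c r * (rhoKbar c r - rhoK c r) * y r := by
  have hderiv : deriv y =ᶠ[𝓝 r] y' := hy.mono fun s hs => hs.deriv
  rw [Lop, hderiv.deriv_eq, hy'.deriv, hderiv.eq_of_nhds]

theorem Lop_congr {f g : ℝ → ℂ} (h : f =ᶠ[𝓝 r] g) : Lop c f r = Lop c g r := by
  rw [Lop, Lop, h.deriv.deriv_eq, h.deriv.eq_of_nhds, h.eq_of_nhds]

theorem Lop_linear_combination {f g f' g' : ℝ → ℂ} {f'' g'' : ℂ}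
    (hf : ∀ᶠ s in 𝓝 r, HasDerivAt f (f' s) s) (hf' : HasDerivAt f' f'' r)
    (hg : ∀ᶠ s in 𝓝 r, HasDerivAt g (g' s) s) (hg' : HasDerivAt g' g'' r) (α β : ℂ) :
    Lop c (fun s => α * f s + β * g s) r = α * Lop c f r + β * Lop c g r := by
  have hsum : ∀ᶠ s in 𝓝 r, HasDerivAt (fun s => α * f s + β * g s) (α * f' s + β * g' s) s := by
    filter_upwards [hf, hg] with s hfs hgs
    exact (hfs.const_mul α).add (hgs.const_mul β)
  rw [Lop_eq_of_hasDerivAt hsum ((hf'.const_mul α).add (hg'.const_mul β)),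
    Lop_eq_of_hasDerivAt hf hf', Lop_eq_of_hasDerivAt hg hg']
  ring

def kerrIndicial (a b : ℤ) (p q : ℂ) : ℂ :=
  (a * p + b * q) ^ 2 + a * p ^ 2 + b * q ^ 2 - 2 * q * (a * p + b * q) - 2 * q ^ 2
    + 2 * p * (q - p)

theorem Lop_kerrMonomial (hz : (r : ℂ) - c * I ≠ 0) (a b : ℤ) :
    Lop c (kerrMonomial c a b) r
      = kerrIndicial a b (rhoK c r) (rhoKbar c r) * kerrMonomial c a b r := by
  rw [Lop_eq_of_hasDerivAt (eventually_hasDerivAt_kerrMonomial hz a b)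
    (hasDerivAt_deriv_kerrMonomial hz a b), kerrIndicial]
  ring

theorem Lop_kerrMonomial_add (hz : (r : ℂ) - c * I ≠ 0) (α β : ℂ) (a b a' b' : ℤ) :
    Lop c (fun s => α * kerrMonomial c a b s + β * kerrMonomial c a' b' s) r
      = α * (kerrIndicial a b (rhoK c r) (rhoKbar c r) * kerrMonomial c a b r)
        + β * (kerrIndicial a' b' (rhoK c r) (rhoKbar c r) * kerrMonomial c a' b' r) := by
  rw [Lop_linear_combination (eventually_hasDerivAt_kerrMonomial hz a b)
    (hasDerivAt_deriv_kerrMonomial hz a b) (eventually_hasDerivAt_kerrMonomial hz a' b')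
    (hasDerivAt_deriv_kerrMonomial hz a' b'), Lop_kerrMonomial hz, Lop_kerrMonomial hz]

theorem Lop_rhoKbar_mul_rhoK_add_rhoKbar (hz : (r : ℂ) - c * I ≠ 0) :
    Lop c (fun s => rhoKbar c s * (rhoK c s + rhoKbar c s)) r = 0 := by
  have hy : (fun s => rhoKbar c s * (rhoK c s + rhoKbar c s))
      = fun s => 1 * kerrMonomial c 1 1 s + 1 * kerrMonomial c 0 2 s := by
    funext s
    simp only [kerrMonomial, zpow_one, zpow_zero, zpow_two]
    ring
  rw [hy, Lop_kerrMonomial_add hz]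
  simp only [kerrIndicial, kerrMonomial, zpow_one, zpow_zero, zpow_two]
  push_cast
  ring

theorem Lop_rhoKbar_mul_rhoKbar_sub_two_mul_rhoK_div_rhoK_pow_three
    (hz : (r : ℂ) - c * I ≠ 0) :
    Lop c (fun s => rhoKbar c s * (rhoKbar c s - 2 * rhoK c s) / (rhoK c s) ^ 3) r = 0 := by
  have hy : (fun s => rhoKbar c s * (rhoKbar c s - 2 * rhoK c s) / (rhoK c s) ^ 3)
      =ᶠ[𝓝 r] fun s => 1 * kerrMonomial c (-3) 2 s + (-2) * kerrMonomial c (-2) 1 s := by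
    filter_upwards [eventually_ofReal_sub_mul_I_ne_zero hz] with s hs
    have := rhoK_ne_zero hs
    simp only [kerrMonomial, zpow_neg, zpow_ofNat]
    field_simp
    ring
  have := rhoK_ne_zero hz
  rw [Lop_congr hy, Lop_kerrMonomial_add hz]
  simp only [kerrIndicial, kerrMonomial, zpow_neg, zpow_ofNat]
  push_cast
  field_simp
  ring

end Kerr

/-- y₁ = ρ̄(ρ+ρ̄) and y₂ = ρ̄(ρ̄-2ρ)/ρ³ solve L y = 0 on (0,∞). -/
theorem stmt3 (c : ℝ) (r : ℝ) (hr : 0 < r) :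
    Lop c (fun s => rhoKbar c s * (rhoK c s + rhoKbar c s)) r = 0 ∧
    Lop c (fun s => rhoKbar c s * (rhoKbar c s - 2 * rhoK c s) / (rhoK c s) ^ 3) r = 0 := by
  have hz : (r : ℂ) - c * I ≠ 0 := fun h => hr.ne' (by simpa using congrArg re h)
  exact ⟨Lop_rhoKbar_mul_rhoK_add_rhoKbar hz,
    Lop_rhoKbar_mul_rhoKbar_sub_two_mul_rhoK_div_rhoK_pow_three hz⟩
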